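/- Let L = {β, θ, γ} ∈ 𝓛 be a line of 𝕊 contained in 𝓟, and let α ∈ P ∪ P' with d(α,β) = d(α,θ) = 3 in 𝕊. Then d(α,γ) = 2 in 𝕊. -/

import Mathlib

/- Common setup: the generalized quadrangle of order (2,2) on the edges of a
   6-element set, the near hexagon 𝓢 = ℍ₃, and the near hexagon 𝕊 = DSp(6,2). -/

/-- An edge: a 2-element subset of `Fin 6`. -/
abbrev Edge : Type := {e : Finset (Fin 6) // e.card = 2}

/-- `perp A` is `A^⊥`: the set of edges equal to or disjoint from every element of `A`. -/
def perp (A : Set Edge) : Set Edge := {y | ∀ x ∈ A, x = y ∨ Disjoint x.1 y.1}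

/-- A factor: a set of three pairwise disjoint edges (a perfect matching of `Fin 6`). -/
def IsFactor (T : Set Edge) : Prop :=
  T.ncard = 3 ∧ T.Pairwise (fun x y => Disjoint x.1 y.1)

/-- A triad: a set of three pairwise non-collinear (i.e. pairwise intersecting) distinct
    edges. -/
def IsTriad (T : Set Edge) : Prop :=
  T.ncard = 3 ∧ T.Pairwise (fun x y => ¬ Disjoint x.1 y.1)

/-- A complete triad: a triad not contained in a set of four pairwise non-collinear edges. -/
def IsCompleteTriad (T : Set Edge) : Prop :=
  IsTriad T ∧
    ¬ ∃ U : Set Edge, T ⊆ U ∧ U.ncard = 4 ∧ U.Pairwise (fun x y => ¬ Disjoint x.1 y.1)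

/-- The point set 𝓟 of 𝓢 : pairs `(x,u)` of edges with `x = u` or `x ∩ u = ∅`. -/
def NPoint : Type := {p : Edge × Edge // p.1 = p.2 ∨ Disjoint p.1.1 p.2.1}

/-- The lines 𝓛 of 𝓢 : sets `{(x, σ x) : x ∈ T}` where `T` is a factor or a complete
    triad and `σ : T → T^⊥` is a bijection. -/
def IsLine (L : Set NPoint) : Prop :=
  ∃ (T : Set Edge) (σ : Edge → Edge),
    (IsFactor T ∨ IsCompleteTriad T) ∧ Set.BijOn σ T (perp T) ∧
    L = {p : NPoint | p.1.1 ∈ T ∧ p.1.2 = σ p.1.1}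

/-- The collinearity graph of 𝓢. -/
def NG : SimpleGraph NPoint where
  Adj α β := α ≠ β ∧ ∃ L, IsLine L ∧ α ∈ L ∧ β ∈ L
  symm := ⟨fun _ _ ⟨h, L, hL, ha, hb⟩ => ⟨h.symm, L, hL, hb, ha⟩⟩
  loopless := ⟨fun _ h => h.1 rfl⟩

/-- The point set ℙ of 𝕊 : the disjoint union 𝓟 ⊔ P ⊔ P' where `P` and `P'` are two
    copies of the edge set. -/
def BPoint : Type := NPoint ⊕ Edge ⊕ Edge

/-- Embedding of 𝓟 into ℙ. -/
def inS (p : NPoint) : BPoint := Sum.inl p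

/-- Embedding of the first copy `P` of the edge set into ℙ (an edge `x` gives `x ∈ P`). -/
def inP (x : Edge) : BPoint := Sum.inr (Sum.inl x)

/-- Embedding of the second copy `P'` of the edge set into ℙ (an edge `u` gives `u' ∈ P'`). -/
def inP' (u : Edge) : BPoint := Sum.inr (Sum.inr u)

/-- The lines 𝕃 of 𝕊 : the lines of 𝓛 together with the lines `{x, (x,u), u'}`
    for `(x,u) ∈ 𝓟` (the latter being the lines of type `𝕃₁`). -/
def IsBLine (L : Set BPoint) : Prop :=
  (∃ L₀ : Set NPoint, IsLine L₀ ∧ L = inS '' L₀) ∨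
  (∃ p : NPoint, L = {inP p.1.1, inS p, inP' p.1.2})

/-- The collinearity graph of 𝕊. -/
def BG : SimpleGraph BPoint where
  Adj α β := α ≠ β ∧ ∃ L, IsBLine L ∧ α ∈ L ∧ β ∈ L
  symm := ⟨fun _ _ ⟨h, L, hL, ha, hb⟩ => ⟨h.symm, L, hL, hb, ha⟩⟩
  loopless := ⟨fun _ h => h.1 rfl⟩


/-! ### Auxiliary lemmas -/

section Aux

/-- "Good" triple of edges: a factor-triple or a triangle-triple. -/
abbrev GoodTriple (u v w : Edge) : Prop :=
  (Disjoint u.1 v.1 ∧ Disjoint u.1 w.1 ∧ Disjoint v.1 w.1) ∨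
  (¬ Disjoint u.1 v.1 ∧ ¬ Disjoint u.1 w.1 ∧ ¬ Disjoint v.1 w.1 ∧
    ¬ ∃ p, p ∈ u.1 ∧ p ∈ v.1 ∧ p ∈ w.1)

set_option synthInstance.maxSize 5000 in
set_option maxHeartbeats 4000000 in
/-- In a factor, the perp of the triple is the triple itself. -/
lemma aux_A1 : ∀ b t g e : Edge, b ≠ t → b ≠ g → t ≠ g →
    Disjoint b.1 t.1 → Disjoint b.1 g.1 → Disjoint t.1 g.1 →
    (b = e ∨ Disjoint b.1 e.1) → (t = e ∨ Disjoint t.1 e.1) → (g = e ∨ Disjoint g.1 e.1) →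
    e = b ∨ e = t ∨ e = g := by decide

set_option synthInstance.maxSize 5000 in
set_option maxHeartbeats 4000000 in
/-- A triangle covers exactly three vertices. -/
lemma aux_U3 : ∀ b t g : Edge, b ≠ t → b ≠ g → t ≠ g →
    ¬ Disjoint b.1 t.1 → ¬ Disjoint b.1 g.1 → ¬ Disjoint t.1 g.1 →
    (¬ ∃ p, p ∈ b.1 ∧ p ∈ t.1 ∧ p ∈ g.1) → (b.1 ∪ t.1 ∪ g.1).card = 3 := by decide

set_option synthInstance.maxSize 5000 in
set_option maxHeartbeats 4000000 in
/-- Three distinct edges on at most three vertices form a triangle. -/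
lemma aux_V : ∀ e f h : Edge, (e.1 ∪ f.1 ∪ h.1).card ≤ 3 → e ≠ f → e ≠ h → f ≠ h →
    ¬ Disjoint e.1 f.1 ∧ ¬ Disjoint e.1 h.1 ∧ ¬ Disjoint f.1 h.1 ∧
      ¬ ∃ p, p ∈ e.1 ∧ p ∈ f.1 ∧ p ∈ h.1 := by decide

set_option synthInstance.maxSize 5000 in
set_option maxHeartbeats 4000000 in
/-- A triad with a common vertex extends to a fourth pairwise intersecting edge. -/
lemma aux_NCex : ∀ b t g : Edge, b ≠ t → b ≠ g → t ≠ g →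
    ¬ Disjoint b.1 t.1 → ¬ Disjoint b.1 g.1 → ¬ Disjoint t.1 g.1 →
    (∃ p, p ∈ b.1 ∧ p ∈ t.1 ∧ p ∈ g.1) →
    ∃ h : Edge, h ≠ b ∧ h ≠ t ∧ h ≠ g ∧
      ¬ Disjoint h.1 b.1 ∧ ¬ Disjoint h.1 t.1 ∧ ¬ Disjoint h.1 g.1 := by decide

set_option synthInstance.maxSize 5000 in
set_option maxHeartbeats 4000000 in
/-- Core lemma: if x meets two edges of a good triple (and differs from them), then it is
equal to or disjoint from the third. -/
lemma aux_core : ∀ u v w x : Edge, u ≠ v → u ≠ w → v ≠ w → GoodTriple u v w →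
    x ≠ u → x ≠ v → ¬ Disjoint x.1 u.1 → ¬ Disjoint x.1 v.1 →
    x = w ∨ Disjoint x.1 w.1 := by decide

/-- The triple underlying a factor or a complete triad is good. -/
lemma goodTriple_of_line {b t g : Edge} (hbt : b ≠ t) (hbg : b ≠ g) (htg : t ≠ g)
    (hT : IsFactor ({b, t, g} : Set Edge) ∨ IsCompleteTriad ({b, t, g} : Set Edge)) :
    GoodTriple b t g := by
  have hbm : b ∈ ({b, t, g} : Set Edge) := by simp
  have htm : t ∈ ({b, t, g} : Set Edge) := by simp
  have hgm : g ∈ ({b, t, g} : Set Edge) := by simp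
  rcases hT with hF | hC
  · exact Or.inl ⟨hF.2 hbm htm hbt, hF.2 hbm hgm hbg, hF.2 htm hgm htg⟩
  · obtain ⟨⟨-, hpw⟩, hcomp⟩ := hC
    have h1 : ¬ Disjoint b.1 t.1 := hpw hbm htm hbt
    have h2 : ¬ Disjoint b.1 g.1 := hpw hbm hgm hbg
    have h3 : ¬ Disjoint t.1 g.1 := hpw htm hgm htg
    refine Or.inr ⟨h1, h2, h3, ?_⟩
    intro hp
    obtain ⟨h, hhb, hht, hhg, hb', ht', hg'⟩ := aux_NCex b t g hbt hbg htg h1 h2 h3 hp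
    refine hcomp ⟨insert h {b, t, g}, Set.subset_insert _ _, ?_, ?_⟩
    · have hnm : h ∉ ({b, t, g} : Set Edge) := by simp [hhb, hht, hhg]
      rw [Set.ncard_insert_of_notMem hnm]
      rw [Set.ncard_eq_three.mpr ⟨b, t, g, hbt, hbg, htg, rfl⟩]
    · intro x hx y hy hxy
      simp only [Set.mem_insert_iff, Set.mem_singleton_iff] at hx hy
      rcases hx with rfl | rfl | rfl | rfl <;> rcases hy with rfl | rfl | rfl | rfl <;>
        first
          | exact absurd rfl hxy
          | assumption
          | exact fun d => hb' d.symm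
          | exact fun d => ht' d.symm
          | exact fun d => hg' d.symm
          | exact fun d => h1 d.symm
          | exact fun d => h2 d.symm
          | exact fun d => h3 d.symm

/-- The perp triple of a good triple is good. -/
lemma goodTriple_perp {b t g vb vt vg : Edge}
    (hbt : b ≠ t) (hbg : b ≠ g) (htg : t ≠ g)
    (h12 : vb ≠ vt) (h13 : vb ≠ vg) (h23 : vt ≠ vg)
    (hG : GoodTriple b t g)
    (hvb : ∀ y ∈ ({b, t, g} : Set Edge), y = vb ∨ Disjoint y.1 vb.1)
    (hvt : ∀ y ∈ ({b, t, g} : Set Edge), y = vt ∨ Disjoint y.1 vt.1)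
    (hvg : ∀ y ∈ ({b, t, g} : Set Edge), y = vg ∨ Disjoint y.1 vg.1) :
    GoodTriple vb vt vg := by
  have hbm : b ∈ ({b, t, g} : Set Edge) := by simp
  have htm : t ∈ ({b, t, g} : Set Edge) := by simp
  have hgm : g ∈ ({b, t, g} : Set Edge) := by simp
  rcases hG with ⟨d1, d2, d3⟩ | ⟨n1, n2, n3, hnc⟩
  · -- factor case: each vi lies in {b, t, g}
    have key : ∀ e : Edge, (∀ y ∈ ({b, t, g} : Set Edge), y = e ∨ Disjoint y.1 e.1) →
        e = b ∨ e = t ∨ e = g := fun e he =>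
      aux_A1 b t g e hbt hbg htg d1 d2 d3 (he b hbm) (he t htm) (he g hgm)
    have pd : ∀ e f : Edge, (e = b ∨ e = t ∨ e = g) → (f = b ∨ f = t ∨ f = g) → e ≠ f →
        Disjoint e.1 f.1 := by
      rintro e f (rfl | rfl | rfl) (rfl | rfl | rfl) hef <;>
        first
          | exact absurd rfl hef
          | assumption
          | exact d1.symm
          | exact d2.symm
          | exact d3.symm
    exact Or.inl ⟨pd vb vt (key vb hvb) (key vt hvt) h12,
      pd vb vg (key vb hvb) (key vg hvg) h13, pd vt vg (key vt hvt) (key vg hvg) h23⟩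
  · -- triangle case: each vi is disjoint from b, t, g
    have key : ∀ e : Edge, (∀ y ∈ ({b, t, g} : Set Edge), y = e ∨ Disjoint y.1 e.1) →
        Disjoint b.1 e.1 ∧ Disjoint t.1 e.1 ∧ Disjoint g.1 e.1 := by
      intro e he
      have h1 : Disjoint b.1 e.1 := by
        rcases he b hbm with rfl | h
        · rcases he t htm with rfl | h'
          · exact absurd rfl hbt
          · exact absurd h'.symm n1
        · exact h
      have h2 : Disjoint t.1 e.1 := by
        rcases he t htm with rfl | h
        · rcases he b hbm with rfl | h'
          · exact absurd rfl hbt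
          · exact absurd h' n1
        · exact h
      have h3 : Disjoint g.1 e.1 := by
        rcases he g hgm with rfl | h
        · rcases he b hbm with rfl | h'
          · exact absurd rfl hbg
          · exact absurd h' n2
        · exact h
      exact ⟨h1, h2, h3⟩
    obtain ⟨b1, t1, g1⟩ := key vb hvb
    obtain ⟨b2, t2, g2⟩ := key vt hvt
    obtain ⟨b3, t3, g3⟩ := key vg hvg
    have hcard : (b.1 ∪ t.1 ∪ g.1).card = 3 := aux_U3 b t g hbt hbg htg n1 n2 n3 hnc
    have hsub : ∀ {e : Edge}, Disjoint b.1 e.1 → Disjoint t.1 e.1 → Disjoint g.1 e.1 →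
        e.1 ⊆ (b.1 ∪ t.1 ∪ g.1)ᶜ := by
      intro e he1 he2 he3 p hp
      simp only [Finset.mem_compl, Finset.mem_union, not_or]
      exact ⟨⟨Finset.disjoint_right.mp he1 hp, Finset.disjoint_right.mp he2 hp⟩,
        Finset.disjoint_right.mp he3 hp⟩
    have hU : vb.1 ∪ vt.1 ∪ vg.1 ⊆ (b.1 ∪ t.1 ∪ g.1)ᶜ :=
      Finset.union_subset (Finset.union_subset (hsub b1 t1 g1) (hsub b2 t2 g2))
        (hsub b3 t3 g3)
    have hle : (vb.1 ∪ vt.1 ∪ vg.1).card ≤ 3 := by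
      calc (vb.1 ∪ vt.1 ∪ vg.1).card ≤ ((b.1 ∪ t.1 ∪ g.1)ᶜ).card :=
            Finset.card_le_card hU
        _ = 3 := by rw [Finset.card_compl, hcard]; rfl
    exact Or.inr (aux_V vb vt vg hle h12 h13 h23)

/-! ### Adjacency lemmas for the graph `BG` -/

lemma inP_ne_inS (x : Edge) (p : NPoint) : inP x ≠ inS p := fun h => Sum.inr_ne_inl h

lemma inP'_ne_inS (u : Edge) (p : NPoint) : inP' u ≠ inS p := fun h => Sum.inr_ne_inl h

lemma inP_ne_inP' (x u : Edge) : inP x ≠ inP' u := by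
  intro h; injection h with h'; exact Sum.inl_ne_inr h'

lemma inP_injective : Function.Injective inP := by
  intro a b h; injection h with h'; injection h' with h''

lemma inP'_injective : Function.Injective inP' := by
  intro a b h; injection h with h'; injection h' with h''

lemma inS_injective : Function.Injective inS := by
  intro a b h; injection h with h'

lemma adj_PP' (p : NPoint) : BG.Adj (inP p.1.1) (inP' p.1.2) :=
  ⟨inP_ne_inP' _ _, {inP p.1.1, inS p, inP' p.1.2}, Or.inr ⟨p, rfl⟩, by simp, by simp⟩

lemma adj_PS (p : NPoint) : BG.Adj (inP p.1.1) (inS p) :=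
  ⟨inP_ne_inS _ _, {inP p.1.1, inS p, inP' p.1.2}, Or.inr ⟨p, rfl⟩, by simp, by simp⟩

lemma adj_SP' (p : NPoint) : BG.Adj (inS p) (inP' p.1.2) :=
  ⟨fun h => inP'_ne_inS _ _ h.symm, {inP p.1.1, inS p, inP' p.1.2}, Or.inr ⟨p, rfl⟩,
    by simp, by simp⟩

lemma adj_P_S {x : Edge} {q : NPoint} (h : BG.Adj (inP x) (inS q)) : q.1.1 = x := by
  obtain ⟨-, L, hL, hx, hq⟩ := h
  rcases hL with ⟨L0, -, rfl⟩ | ⟨p, rfl⟩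
  · obtain ⟨r, -, hr⟩ := hx
    exact absurd hr.symm (inP_ne_inS _ _)
  · simp only [Set.mem_insert_iff, Set.mem_singleton_iff] at hx hq
    have hx' : x = p.1.1 := by
      rcases hx with h | h | h
      · exact inP_injective h
      · exact absurd h (inP_ne_inS _ _)
      · exact absurd h (inP_ne_inP' _ _)
    have hq' : q = p := by
      rcases hq with h | h | h
      · exact absurd h.symm (inP_ne_inS _ _)
      · exact inS_injective h
      · exact absurd h.symm (inP'_ne_inS _ _)
    rw [hq', hx']

lemma adj_P'_S {u : Edge} {q : NPoint} (h : BG.Adj (inP' u) (inS q)) : q.1.2 = u := by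
  obtain ⟨-, L, hL, hu, hq⟩ := h
  rcases hL with ⟨L0, -, rfl⟩ | ⟨p, rfl⟩
  · obtain ⟨r, -, hr⟩ := hu
    exact absurd hr.symm (inP'_ne_inS _ _)
  · simp only [Set.mem_insert_iff, Set.mem_singleton_iff] at hu hq
    have hu' : u = p.1.2 := by
      rcases hu with h | h | h
      · exact absurd h.symm (inP_ne_inP' _ _)
      · exact absurd h (inP'_ne_inS _ _)
      · exact inP'_injective h
    have hq' : q = p := by
      rcases hq with h | h | h
      · exact absurd h.symm (inP_ne_inS _ _)
      · exact inS_injective h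
      · exact absurd h.symm (inP'_ne_inS _ _)
    rw [hq', hu']

/-! ### Distance lemmas -/

lemma dist_le_two {a c b : BPoint} (h1 : BG.Adj a c) (h2 : BG.Adj c b) :
    BG.dist a b ≤ 2 :=
  SimpleGraph.dist_le (SimpleGraph.Walk.cons h1 (SimpleGraph.Walk.cons h2 SimpleGraph.Walk.nil))

lemma dist_eq_two {a b c : BPoint} (hne : a ≠ b) (hnadj : ¬ BG.Adj a b)
    (h1 : BG.Adj a c) (h2 : BG.Adj c b) : BG.dist a b = 2 := by
  have hle := dist_le_two h1 h2
  have h0 : BG.dist a b ≠ 0 := by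
    intro h
    rcases SimpleGraph.dist_eq_zero_iff_eq_or_not_reachable.mp h with h | h
    · exact hne h
    · exact h ⟨SimpleGraph.Walk.cons h1 (SimpleGraph.Walk.cons h2 SimpleGraph.Walk.nil)⟩
  have h1' : BG.dist a b ≠ 1 := fun h => hnadj (SimpleGraph.dist_eq_one_iff_adj.mp h)
  omega

end Aux

set_option maxHeartbeats 1600000 in
/-- If `L = {β,θ,γ} ∈ 𝓛` is a line of 𝕊 contained in 𝓟 and `α ∈ P ∪ P'`
with `d(α,β) = d(α,θ) = 3` in 𝕊, then `d(α,γ) = 2` in 𝕊. -/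
theorem statement17 (β θ γ : NPoint)
    (hβθ : β ≠ θ) (hβγ : β ≠ γ) (hθγ : θ ≠ γ)
    (hL : IsLine {β, θ, γ}) (α : BPoint)
    (hα : (∃ x : Edge, α = inP x) ∨ (∃ u : Edge, α = inP' u))
    (h1 : BG.dist α (inS β) = 3) (h2 : BG.dist α (inS θ) = 3) :
    BG.dist α (inS γ) = 2 := by
  classical
  obtain ⟨T, σ, hT, hσ, hLeq⟩ := hL
  have hβm : β.1.1 ∈ T ∧ β.1.2 = σ β.1.1 := by
    have h : β ∈ ({β, θ, γ} : Set NPoint) := by simp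
    rw [hLeq] at h; exact h
  have hθm : θ.1.1 ∈ T ∧ θ.1.2 = σ θ.1.1 := by
    have h : θ ∈ ({β, θ, γ} : Set NPoint) := by simp
    rw [hLeq] at h; exact h
  have hγm : γ.1.1 ∈ T ∧ γ.1.2 = σ γ.1.1 := by
    have h : γ ∈ ({β, θ, γ} : Set NPoint) := by simp
    rw [hLeq] at h; exact h
  -- distinctness of first components
  have hbt : β.1.1 ≠ θ.1.1 := fun h =>
    hβθ (Subtype.ext (Prod.ext h (by rw [hβm.2, hθm.2, h])))
  have hbg : β.1.1 ≠ γ.1.1 := fun h =>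
    hβγ (Subtype.ext (Prod.ext h (by rw [hβm.2, hγm.2, h])))
  have htg : θ.1.1 ≠ γ.1.1 := fun h =>
    hθγ (Subtype.ext (Prod.ext h (by rw [hθm.2, hγm.2, h])))
  -- distinctness of second components
  have hvbt : β.1.2 ≠ θ.1.2 := by
    rw [hβm.2, hθm.2]; exact fun h => hbt (hσ.injOn hβm.1 hθm.1 h)
  have hvbg : β.1.2 ≠ γ.1.2 := by
    rw [hβm.2, hγm.2]; exact fun h => hbg (hσ.injOn hβm.1 hγm.1 h)
  have hvtg : θ.1.2 ≠ γ.1.2 := by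
    rw [hθm.2, hγm.2]; exact fun h => htg (hσ.injOn hθm.1 hγm.1 h)
  -- `T` is exactly the triple
  have hTcard : T.ncard = 3 := by rcases hT with h | h; exacts [h.1, h.1.1]
  have hTeq : T = {β.1.1, θ.1.1, γ.1.1} := by
    refine (Set.eq_of_subset_of_ncard_le ?_ ?_ (Set.toFinite _)).symm
    · intro y hy
      simp only [Set.mem_insert_iff, Set.mem_singleton_iff] at hy
      rcases hy with rfl | rfl | rfl
      exacts [hβm.1, hθm.1, hγm.1]
    · rw [hTcard, Set.ncard_eq_three.mpr ⟨_, _, _, hbt, hbg, htg, rfl⟩]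
  rw [hTeq] at hT
  -- perp membership of second components
  have hperp : ∀ p : NPoint, p.1.1 ∈ T ∧ p.1.2 = σ p.1.1 →
      ∀ y ∈ ({β.1.1, θ.1.1, γ.1.1} : Set Edge), y = p.1.2 ∨ Disjoint y.1 p.1.2.1 := by
    intro p hp y hy
    have : p.1.2 ∈ perp T := hp.2 ▸ hσ.mapsTo hp.1
    exact this y (hTeq ▸ hy)
  have hvb := hperp β hβm
  have hvt := hperp θ hθm
  have hvg := hperp γ hγm
  have hGT : GoodTriple β.1.1 θ.1.1 γ.1.1 := goodTriple_of_line hbt hbg htg hT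
  have hGP : GoodTriple β.1.2 θ.1.2 γ.1.2 :=
    goodTriple_perp hbt hbg htg hvbt hvbg hvtg hGT hvb hvt hvg
  have hbmem : β.1.1 ∈ ({β.1.1, θ.1.1, γ.1.1} : Set Edge) := by simp
  have htmem : θ.1.1 ∈ ({β.1.1, θ.1.1, γ.1.1} : Set Edge) := by simp
  have hgmem : γ.1.1 ∈ ({β.1.1, θ.1.1, γ.1.1} : Set Edge) := by simp
  rcases hα with ⟨x, rfl⟩ | ⟨u, rfl⟩
  · -- case α = x ∈ P
    have hstep : ∀ δ : NPoint, BG.dist (inP x) (inS δ) = 3 →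
        x ≠ δ.1.2 ∧ ¬ Disjoint x.1 δ.1.2.1 := by
      intro δ hδ
      by_contra hcon
      have hpt : x = δ.1.2 ∨ Disjoint x.1 δ.1.2.1 := by tauto
      have a1 : BG.Adj (inP x) (inP' δ.1.2) := adj_PP' ⟨(x, δ.1.2), hpt⟩
      have a2 : BG.Adj (inP' δ.1.2) (inS δ) := (adj_SP' δ).symm
      have := dist_le_two a1 a2
      rw [hδ] at this
      omega
    obtain ⟨hxvb, hxvb'⟩ := hstep β h1
    obtain ⟨hxvt, hxvt'⟩ := hstep θ h2
    have hkey : x = γ.1.2 ∨ Disjoint x.1 γ.1.2.1 :=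
      aux_core β.1.2 θ.1.2 γ.1.2 x hvbt hvbg hvtg hGP hxvb hxvt hxvb' hxvt'
    have hgx : γ.1.1 ≠ x := by
      rintro rfl
      rcases hvb γ.1.1 hgmem with h | h
      · exact hxvb h
      · exact hxvb' h
    have a1 : BG.Adj (inP x) (inP' γ.1.2) := adj_PP' ⟨(x, γ.1.2), hkey⟩
    have a2 : BG.Adj (inP' γ.1.2) (inS γ) := (adj_SP' γ).symm
    exact dist_eq_two (inP_ne_inS _ _) (fun h => hgx (adj_P_S h)) a1 a2
  · -- case α = u' ∈ P'
    have hstep : ∀ δ : NPoint, BG.dist (inP' u) (inS δ) = 3 →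
        δ.1.1 ≠ u ∧ ¬ Disjoint δ.1.1.1 u.1 := by
      intro δ hδ
      by_contra hcon
      have hpt : δ.1.1 = u ∨ Disjoint δ.1.1.1 u.1 := by tauto
      have a1 : BG.Adj (inP' u) (inP δ.1.1) := (adj_PP' ⟨(δ.1.1, u), hpt⟩).symm
      have a2 : BG.Adj (inP δ.1.1) (inS δ) := adj_PS δ
      have := dist_le_two a1 a2
      rw [hδ] at this
      omega
    obtain ⟨hub, hub'⟩ := hstep β h1
    obtain ⟨hut, hut'⟩ := hstep θ h2
    have hkey : u = γ.1.1 ∨ Disjoint u.1 γ.1.1.1 :=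
      aux_core β.1.1 θ.1.1 γ.1.1 u hbt hbg htg hGT (fun h => hub h.symm)
        (fun h => hut h.symm) (fun d => hub' d.symm) (fun d => hut' d.symm)
    have hpt : γ.1.1 = u ∨ Disjoint γ.1.1.1 u.1 := by
      rcases hkey with h | h
      · exact Or.inl h.symm
      · exact Or.inr h.symm
    have hnadj : ¬ BG.Adj (inP' u) (inS γ) := by
      intro h
      have hgu : γ.1.2 = u := adj_P'_S h
      rcases hvg θ.1.1 htmem with h' | h'
      · exact hut (h'.trans hgu)
      · exact hut' (hgu ▸ h')
    have a1 : BG.Adj (inP' u) (inP γ.1.1) := (adj_PP' ⟨(γ.1.1, u), hpt⟩).symm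
    have a2 : BG.Adj (inP γ.1.1) (inS γ) := adj_PS γ
    exact dist_eq_two (inP'_ne_inS _ _) hnadj a1 a2
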